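/- arXiv:math/0111272 — 3 statements merged into one kernel-verified Lean document; each statement's English description precedes it below -/
import Mathlib

section
/- The cosine transform of an integrable function is continuously differentiable away from the origin: if f ∈ L^1(S^{n-1}), then the function Tf(x) = ∫_{S^{n-1}} |⟨x,ξ⟩| f(ξ) dξ is C^1 on R^n \ {0}. -/
open MeasureTheory Real Set Metric
open scoped RealInnerProductSpace ENNReal MeasureTheory

set_option synthInstance.maxHeartbeats 1000000
set_option maxHeartbeats 2000000

noncomputable section

lemma null_perp (n : ℕ) (hn : 2 ≤ n) {x : EuclideanSpace ℝ (Fin n)} (hx : x ≠ 0) :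
    (μH[(n:ℝ)-1]) ({ξ : EuclideanSpace ℝ (Fin n) | ⟪x, ξ⟫ = 0} ∩ sphere 0 1) = 0 := by
  have h1 : Module.finrank ℝ (ℝ ∙ x) = 1 := finrank_span_singleton hx
  have h2 := Submodule.finrank_add_finrank_orthogonal (K := (ℝ ∙ x)) (𝕜 := ℝ)
  have h3 : Module.finrank ℝ (EuclideanSpace ℝ (Fin n)) = n := finrank_euclideanSpace_fin
  have hfin : Module.finrank ℝ ((ℝ ∙ x)ᗮ : Submodule ℝ (EuclideanSpace ℝ (Fin n))) = n - 1 := by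
    omega
  set K : Submodule ℝ (EuclideanSpace ℝ (Fin n)) := (ℝ ∙ x)ᗮ with hK
  have hsub : {ξ : EuclideanSpace ℝ (Fin n) | ⟪x, ξ⟫ = 0} ∩ sphere 0 1
      ⊆ (K.subtype) '' (sphere 0 1) := by
    rintro ξ ⟨hξ1, hξ2⟩
    have hmem : ξ ∈ K := by
      rw [hK, Submodule.mem_orthogonal_singleton_iff_inner_right]
      exact hξ1
    refine ⟨⟨ξ, hmem⟩, ?_, rfl⟩
    simpa [mem_sphere_iff_norm] using hξ2
  refine measure_mono_null hsub ?_
  have hd : (0:ℝ) ≤ (n:ℝ) - 1 := by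
    have : (2:ℝ) ≤ n := by exact_mod_cast hn
    linarith
  have him := (K.subtypeₗᵢ.isometry).hausdorffMeasure_image (Or.inl hd) (sphere (0:K) 1)
  rw [show ((K.subtype) '' (sphere 0 1) : Set (EuclideanSpace ℝ (Fin n)))
      = K.subtypeₗᵢ '' (sphere 0 1) from rfl, him]
  have hcast : ((n:ℝ) - 1) = ((Module.finrank ℝ K : ℕ) : ℝ) := by
    rw [hfin]; push_cast [Nat.cast_sub (by omega : 1 ≤ n)]; ring
  rw [hcast]
  have : Nontrivial K := by
    apply Module.nontrivial_of_finrank_pos (R := ℝ)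
    omega
  exact Measure.addHaar_sphere _ _ _

theorem cosine_transform_C1 (n : ℕ) (hn : 2 ≤ n)
    (f : EuclideanSpace ℝ (Fin n) → ℝ)
    (hf : IntegrableOn f (sphere (0 : EuclideanSpace ℝ (Fin n)) 1) (μH[(n : ℝ) - 1])) :
    ContDiffOn ℝ 1
      (fun x : EuclideanSpace ℝ (Fin n) =>
        ∫ ξ in sphere (0 : EuclideanSpace ℝ (Fin n)) 1, |⟪x, ξ⟫| * f ξ ∂(μH[(n : ℝ) - 1]))
      {(0 : EuclideanSpace ℝ (Fin n))}ᶜ := by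
  set μ : Measure (EuclideanSpace ℝ (Fin n)) :=
    (μH[(n:ℝ)-1]).restrict (sphere (0 : EuclideanSpace ℝ (Fin n)) 1) with hμ
  have hfint : Integrable f μ := hf
  -- a.e. every ξ is on the sphere
  have hae_sphere : ∀ᵐ ξ ∂μ, ‖ξ‖ = 1 := by
    rw [hμ]
    filter_upwards [ae_restrict_mem isClosed_sphere.measurableSet] with ξ hξ
    simpa [mem_sphere_iff_norm] using hξ
  -- a.e. nonvanishing of the inner product for x ≠ 0
  have hae_ne : ∀ x : EuclideanSpace ℝ (Fin n), x ≠ 0 → ∀ᵐ ξ ∂μ, ⟪x, ξ⟫ ≠ 0 := by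
    intro x hx
    rw [ae_iff]
    have hms : MeasurableSet {ξ : EuclideanSpace ℝ (Fin n) | ⟪x, ξ⟫ = 0} :=
      (isClosed_eq (innerSL ℝ x).continuous continuous_const).measurableSet
    rw [hμ, Measure.restrict_apply (by simpa using hms)]
    simpa using null_perp n hn hx
  -- the candidate derivative
  set F' : EuclideanSpace ℝ (Fin n) → EuclideanSpace ℝ (Fin n) →
      (EuclideanSpace ℝ (Fin n) →L[ℝ] ℝ) :=
    fun x ξ => ((if ⟪x, ξ⟫ < 0 then (-1:ℝ) else 1) * f ξ) • (innerSL ℝ ξ) with hF'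
  have hFmeas : ∀ x : EuclideanSpace ℝ (Fin n),
      AEStronglyMeasurable (fun ξ => |⟪x, ξ⟫| * f ξ) μ := by
    intro x
    exact (((innerSL ℝ x).continuous.abs).aestronglyMeasurable).mul hfint.aestronglyMeasurable
  have hF'meas : ∀ x : EuclideanSpace ℝ (Fin n), AEStronglyMeasurable (F' x) μ := by
    intro x
    have hsgn : Measurable fun ξ : EuclideanSpace ℝ (Fin n) =>
        (if ⟪x, ξ⟫ < 0 then (-1:ℝ) else 1) :=
      Measurable.ite (measurableSet_lt (innerSL ℝ x).continuous.measurable measurable_const)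
        measurable_const measurable_const
    exact ((hsgn.aestronglyMeasurable.mul hfint.aestronglyMeasurable).smul
      ((innerSL ℝ (E := EuclideanSpace ℝ (Fin n))).continuous.aestronglyMeasurable))
  have hF'bound : ∀ x : EuclideanSpace ℝ (Fin n),
      ∀ᵐ ξ ∂μ, ‖F' x ξ‖ ≤ |f ξ| := by
    intro x
    filter_upwards [hae_sphere] with ξ hξ
    have h1 : |if ⟪x, ξ⟫ < 0 then (-1:ℝ) else 1| = 1 := by split <;> simp
    show ‖((if ⟪x, ξ⟫ < 0 then (-1:ℝ) else 1) * f ξ) • (innerSL ℝ ξ)‖ ≤ |f ξ|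
    have hc : |(if ⟪x, ξ⟫ < 0 then (-1:ℝ) else 1) * f ξ| ≤ |f ξ| := by
      rw [abs_mul, h1, one_mul]
    apply ContinuousLinearMap.opNorm_le_bound _ (abs_nonneg _)
    intro y
    simp only [ContinuousLinearMap.smul_apply, innerSL_apply_apply, smul_eq_mul, Real.norm_eq_abs]
    rw [abs_mul]
    calc |(if ⟪x, ξ⟫ < 0 then (-1:ℝ) else 1) * f ξ| * |⟪ξ, y⟫| ≤ |f ξ| * (‖ξ‖ * ‖y‖) :=
          mul_le_mul hc (abs_real_inner_le_norm _ _) (abs_nonneg _) (abs_nonneg _)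
      _ = |f ξ| * ‖y‖ := by rw [hξ, one_mul]
  -- differentiability of each integrand a.e.
  have hdiff : ∀ x : EuclideanSpace ℝ (Fin n), x ≠ 0 →
      ∀ᵐ ξ ∂μ, HasFDerivAt (fun y => |⟪y, ξ⟫| * f ξ) (F' x ξ) x := by
    intro x hx
    filter_upwards [hae_ne x hx] with ξ hξ
    have hinner : HasFDerivAt (fun y : EuclideanSpace ℝ (Fin n) => ⟪y, ξ⟫) (innerSL ℝ ξ) x := by
      have : (fun y : EuclideanSpace ℝ (Fin n) => ⟪y, ξ⟫) = fun y => innerSL ℝ ξ y := by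
        ext y; exact real_inner_comm _ _
      rw [this]
      exact (innerSL ℝ ξ).hasFDerivAt
    rcases lt_or_gt_of_ne hξ with h | h
    · have habs := hinner.abs_of_neg h
      have := habs.mul_const (f ξ)
      refine this.congr_fderiv ?_
      simp only [hF', if_pos h]
      rw [neg_one_mul, neg_smul, smul_neg]
    · have habs := hinner.abs_of_pos h
      have := habs.mul_const (f ξ)
      refine this.congr_fderiv ?_
      simp only [hF', if_neg (not_lt.mpr h.le)]
      rw [one_mul]
  -- derivative of the integral
  have hderiv : ∀ x : EuclideanSpace ℝ (Fin n), x ≠ 0 →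
      HasFDerivAt (fun y : EuclideanSpace ℝ (Fin n) => ∫ ξ, |⟪y, ξ⟫| * f ξ ∂μ)
        (∫ ξ, F' x ξ ∂μ) x := by
    intro x hx
    have hlip : ∀ᵐ ξ ∂μ, LipschitzOnWith (Real.nnabs (|f ξ|))
        (fun y : EuclideanSpace ℝ (Fin n) => |⟪y, ξ⟫| * f ξ) (ball x 1) := by
      filter_upwards [hae_sphere] with ξ hξ
      apply LipschitzWith.lipschitzOnWith
      apply LipschitzWith.of_dist_le_mul
      intro a b
      rw [Real.dist_eq, ← sub_mul, abs_mul]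
      have h1 : |(|⟪a, ξ⟫| - |⟪b, ξ⟫|)| ≤ |⟪a - b, ξ⟫| := by
        rw [inner_sub_left]
        exact abs_abs_sub_abs_le_abs_sub _ _
      have h2 : |⟪a - b, ξ⟫| ≤ ‖a - b‖ := by
        calc |⟪a - b, ξ⟫| ≤ ‖a - b‖ * ‖ξ‖ := abs_real_inner_le_norm _ _
        _ = ‖a - b‖ := by rw [hξ, mul_one]
      calc |(|⟪a, ξ⟫| - |⟪b, ξ⟫|)| * |f ξ| ≤ ‖a - b‖ * |f ξ| := by
            apply mul_le_mul_of_nonneg_right (h1.trans h2) (abs_nonneg _)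
        _ = ↑(Real.nnabs |f ξ|) * dist a b := by
            rw [Real.coe_nnabs, abs_abs, dist_eq_norm]; ring
    have hFint : Integrable (fun ξ => |⟪x, ξ⟫| * f ξ) μ := by
      apply Integrable.mono' (hfint.abs.const_mul ‖x‖) (hFmeas x)
      filter_upwards [hae_sphere] with ξ hξ
      rw [Real.norm_eq_abs, abs_mul, abs_abs]
      apply mul_le_mul_of_nonneg_right _ (abs_nonneg _)
      calc |⟪x, ξ⟫| ≤ ‖x‖ * ‖ξ‖ := abs_real_inner_le_norm _ _
        _ = ‖x‖ := by rw [hξ, mul_one]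
    exact (hasFDerivAt_integral_of_dominated_loc_of_lip (ball_mem_nhds x one_pos)
      (Filter.Eventually.of_forall hFmeas) hFint (hF'meas x) hlip hfint.abs (hdiff x hx)).2
  -- continuity of the derivative
  have hcont : ContinuousOn (fun x : EuclideanSpace ℝ (Fin n) => ∫ ξ, F' x ξ ∂μ)
      {(0 : EuclideanSpace ℝ (Fin n))}ᶜ := by
    intro x hx
    apply ContinuousAt.continuousWithinAt
    apply continuousAt_of_dominated (Filter.Eventually.of_forall hF'meas)
      (Filter.Eventually.of_forall hF'bound) hfint.abs
    filter_upwards [hae_ne x (by simpa using hx)] with ξ hξ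
    have : ∀ᶠ y in nhds x, F' y ξ = F' x ξ := by
      rcases lt_or_gt_of_ne hξ with h | h
      · have hev : ∀ᶠ y in nhds x, ⟪y, ξ⟫ < 0 := by
          have hopen : IsOpen {y : EuclideanSpace ℝ (Fin n) | ⟪y, ξ⟫ < 0} :=
            isOpen_lt (by exact Continuous.inner continuous_id continuous_const) continuous_const
          exact hopen.mem_nhds h
        filter_upwards [hev] with y hy
        rw [hF']; simp only [if_pos hy, if_pos h]
      · have hev : ∀ᶠ y in nhds x, 0 < ⟪y, ξ⟫ := by
          have hopen : IsOpen {y : EuclideanSpace ℝ (Fin n) | 0 < ⟪y, ξ⟫} :=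
            isOpen_lt continuous_const (by exact Continuous.inner continuous_id continuous_const)
          exact hopen.mem_nhds h
        filter_upwards [hev] with y hy
        rw [hF']; simp only [if_neg (not_lt.mpr hy.le), if_neg (not_lt.mpr h.le)]
    exact Filter.EventuallyEq.continuousAt this
  -- assemble
  have hopen : IsOpen ({(0 : EuclideanSpace ℝ (Fin n))}ᶜ : Set (EuclideanSpace ℝ (Fin n))) :=
    isOpen_compl_singleton
  rw [show (1 : WithTop ℕ∞) = 0 + 1 from rfl, contDiffOn_succ_iff_fderiv_of_isOpen hopen]
  refine ⟨fun x hx => ((hderiv x (by simpa using hx)).differentiableAt).differentiableWithinAt,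
    by simp, ?_⟩
  rw [contDiffOn_zero]
  apply hcont.congr
  intro x hx
  exact ((hderiv x (by simpa using hx)).fderiv)
end
end

section
/- If f ∈ L^1(S^{n-1}) is nonnegative with ∫ f > 0, then the zonoid Z with support function h_Z(x) = ∫_{S^{n-1}} |⟨x,ξ⟩| f(ξ) dξ is strictly convex, i.e., its boundary contains no line segments. -/
open MeasureTheory Real Set Metric Filter
open scoped RealInnerProductSpace ENNReal MeasureTheory Topology

noncomputable section


lemma sphere_hyperplane_null {n : ℕ} (hn : 2 ≤ n) {u : EuclideanSpace ℝ (Fin n)} (hu : u ≠ 0) :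
    μH[(n:ℝ)-1] {ξ : EuclideanSpace ℝ (Fin n) | ‖ξ‖ = 1 ∧ ⟪u, ξ⟫ = 0} = 0 := by
  set K := (ℝ ∙ u)ᗮ with hK
  have hdim : Module.finrank ℝ K = n - 1 := by
    have h1 := Submodule.finrank_add_finrank_orthogonal (K := ℝ ∙ u)
    rw [finrank_span_singleton hu, ← hK, finrank_euclideanSpace_fin] at h1
    omega
  set e : K ≃ₗᵢ[ℝ] EuclideanSpace ℝ (Fin (Module.finrank ℝ K)) := (stdOrthonormalBasis ℝ K).repr with he
  set φ : EuclideanSpace ℝ (Fin (Module.finrank ℝ K)) → EuclideanSpace ℝ (Fin n) :=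
    fun w => ((e.symm w : K) : EuclideanSpace ℝ (Fin n)) with hφ
  have hiso : Isometry φ := K.subtypeₗᵢ.isometry.comp e.symm.isometry
  have himg : {ξ : EuclideanSpace ℝ (Fin n) | ‖ξ‖ = 1 ∧ ⟪u, ξ⟫ = 0} = φ '' sphere 0 1 := by
    ext ξ
    simp only [mem_setOf_eq, mem_image, mem_sphere_zero_iff_norm]
    constructor
    · rintro ⟨h1, h2⟩
      have hmem : ξ ∈ K := Submodule.mem_orthogonal_singleton_iff_inner_right.mpr h2
      refine ⟨e ⟨ξ, hmem⟩, ?_, ?_⟩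
      · rw [e.norm_map]; exact h1
      · simp [hφ]
    · rintro ⟨w, hw, rfl⟩
      refine ⟨?_, ?_⟩
      · show ‖((e.symm w : K) : EuclideanSpace ℝ (Fin n))‖ = 1
        rw [show ‖((e.symm w : K) : EuclideanSpace ℝ (Fin n))‖ = ‖e.symm w‖ from rfl,
          e.symm.norm_map]
        exact hw
      · exact Submodule.mem_orthogonal_singleton_iff_inner_right.mp (e.symm w).2
  rw [himg, hiso.hausdorffMeasure_image (Or.inl (by
    have : (2:ℝ) ≤ (n:ℝ) := by exact_mod_cast hn
    linarith))]
  have hcast : ((n:ℝ) - 1) = ((Module.finrank ℝ (EuclideanSpace ℝ (Fin (Module.finrank ℝ K)))) : ℝ) := by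
    rw [finrank_euclideanSpace_fin, hdim]
    have : (1:ℕ) ≤ n := le_trans one_le_two hn
    push_cast [Nat.cast_sub this]
    ring
  rw [hcast]
  haveI : Nonempty (Fin (Module.finrank ℝ K)) := ⟨⟨0, by omega⟩⟩
  exact Measure.addHaar_sphere _ 0 1


lemma abs_add_abs_sub_eq (a c : ℝ) : |a + c| + |a - c| = 2 * max |a| |c| := by
  rcases abs_cases a with ⟨h1,h2⟩|⟨h1,h2⟩ <;> rcases abs_cases c with ⟨h3,h4⟩|⟨h3,h4⟩ <;>
  rcases abs_cases (a+c) with ⟨h5,h6⟩|⟨h5,h6⟩ <;> rcases abs_cases (a-c) with ⟨h7,h8⟩|⟨h7,h8⟩ <;>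
  rcases max_cases |a| |c| with ⟨h9,h10⟩|⟨h9,h10⟩ <;> linarith

lemma zonoid_key {n : ℕ} (hn : 2 ≤ n)
    {f : EuclideanSpace ℝ (Fin n) → ℝ}
    (hf_int : IntegrableOn f (sphere (0 : EuclideanSpace ℝ (Fin n)) 1) (μH[(n : ℝ) - 1]))
    (hf_nonneg : ∀ ξ, 0 ≤ f ξ)
    {u v : EuclideanSpace ℝ (Fin n)} (hu : u ≠ 0) (hv : v ≠ 0)
    (hnull : μH[(n:ℝ)-1] {ξ : EuclideanSpace ℝ (Fin n) | ‖ξ‖ = 1 ∧ ⟪u, ξ⟫ = 0} = 0)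
    (hle : ∀ t : ℝ, 0 < t → t * ‖v‖^2 ≤
      ∫ ξ in sphere (0 : EuclideanSpace ℝ (Fin n)) 1,
        (|⟪u,ξ⟫ + t*⟪v,ξ⟫| + |⟪u,ξ⟫ - t*⟪v,ξ⟫| - 2*|⟪u,ξ⟫|) * f ξ ∂(μH[(n : ℝ) - 1])) :
    False := by
  set μ : Measure (EuclideanSpace ℝ (Fin n)) := μH[(n : ℝ) - 1] with hμ
  set S : Set (EuclideanSpace ℝ (Fin n)) := sphere 0 1 with hS
  set F : ℝ → EuclideanSpace ℝ (Fin n) → ℝ := fun t ξ =>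
    t⁻¹ * ((|⟪u,ξ⟫ + t*⟪v,ξ⟫| + |⟪u,ξ⟫ - t*⟪v,ξ⟫| - 2*|⟪u,ξ⟫|) * f ξ) with hF
  set G : EuclideanSpace ℝ (Fin n) → ℝ := fun ξ =>
    if ⟪u,ξ⟫ = 0 then 2 * |⟪v,ξ⟫| * f ξ else 0 with hG
  have hciu : Continuous fun ξ : EuclideanSpace ℝ (Fin n) => ⟪u,ξ⟫ :=
    continuous_const.inner continuous_id
  have hciv : Continuous fun ξ : EuclideanSpace ℝ (Fin n) => ⟪v,ξ⟫ :=
    continuous_const.inner continuous_id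
  have hmeas : MeasurableSet {ξ : EuclideanSpace ℝ (Fin n) | ⟪u,ξ⟫ = 0} :=
    (isClosed_eq hciu continuous_const).measurableSet
  have hnull' : (μ.restrict S) {ξ | ⟪u,ξ⟫ = 0} = 0 := by
    rw [Measure.restrict_apply hmeas]
    refine measure_mono_null ?_ hnull
    rintro ξ ⟨h1, h2⟩
    exact ⟨by rwa [hS, mem_sphere_zero_iff_norm] at h2, h1⟩
  have hGzero : ∫ ξ in S, G ξ ∂μ = 0 := by
    refine integral_eq_zero_of_ae ?_
    rw [Filter.EventuallyEq, ae_iff]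
    refine measure_mono_null ?_ hnull'
    intro ξ hξ
    simp only [mem_setOf_eq, Pi.zero_apply] at hξ ⊢
    by_contra h
    exact hξ (by rw [hG]; exact if_neg h)
  have hbound_ptwise : ∀ t : ℝ, 0 < t → ∀ ξ ∈ S, ‖F t ξ‖ ≤ 2 * ‖v‖ * f ξ := by
    intro t ht ξ hξ
    have hβ : |⟪v,ξ⟫| ≤ ‖v‖ := by
      have := abs_real_inner_le_norm v ξ
      rwa [mem_sphere_zero_iff_norm.mp hξ, mul_one] at this
    have h1 : |⟪u,ξ⟫ + t*⟪v,ξ⟫| + |⟪u,ξ⟫ - t*⟪v,ξ⟫| - 2*|⟪u,ξ⟫| =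
        2 * max |⟪u,ξ⟫| (t * |⟪v,ξ⟫|) - 2*|⟪u,ξ⟫| := by
      rw [abs_add_abs_sub_eq, abs_mul, abs_of_pos ht]
    have h2 : (0:ℝ) ≤ 2 * max |⟪u,ξ⟫| (t * |⟪v,ξ⟫|) - 2*|⟪u,ξ⟫| := by
      have := le_max_left |⟪u,ξ⟫| (t * |⟪v,ξ⟫|); linarith
    have h3 : 2 * max |⟪u,ξ⟫| (t * |⟪v,ξ⟫|) - 2*|⟪u,ξ⟫| ≤ 2 * (t * |⟪v,ξ⟫|) := by
      rcases max_cases |⟪u,ξ⟫| (t * |⟪v,ξ⟫|) with ⟨hm, hm'⟩ | ⟨hm, hm'⟩ <;>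
        nlinarith [abs_nonneg ⟪u,ξ⟫, abs_nonneg ⟪v,ξ⟫, ht.le]
    have hnn : (0:ℝ) ≤ F t ξ := by
      rw [hF]; dsimp only; rw [h1]
      exact mul_nonneg (inv_nonneg.mpr ht.le) (mul_nonneg h2 (hf_nonneg ξ))
    have hFle : F t ξ ≤ 2 * ‖v‖ * f ξ := by
      rw [hF]; dsimp only; rw [h1]
      calc t⁻¹ * ((2 * max |⟪u,ξ⟫| (t * |⟪v,ξ⟫|) - 2*|⟪u,ξ⟫|) * f ξ)
          ≤ t⁻¹ * ((2 * (t * |⟪v,ξ⟫|)) * f ξ) :=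
            mul_le_mul_of_nonneg_left (mul_le_mul_of_nonneg_right h3 (hf_nonneg ξ))
              (inv_nonneg.mpr ht.le)
        _ = 2 * |⟪v,ξ⟫| * f ξ := by field_simp
        _ ≤ 2 * ‖v‖ * f ξ := by nlinarith [hf_nonneg ξ]
    rw [Real.norm_eq_abs, abs_of_nonneg hnn]
    exact hFle
  have hmeasF : ∀ t : ℝ, AEStronglyMeasurable (F t) (μ.restrict S) := by
    intro t
    have hc : Continuous fun ξ : EuclideanSpace ℝ (Fin n) =>
        |⟪u,ξ⟫ + t*⟪v,ξ⟫| + |⟪u,ξ⟫ - t*⟪v,ξ⟫| - 2*|⟪u,ξ⟫| :=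
      (((hciu.add (continuous_const.mul hciv)).abs.add (hciu.sub (continuous_const.mul hciv)).abs).sub
        (continuous_const.mul hciu.abs))
    exact ((hc.aestronglyMeasurable.mul hf_int.aestronglyMeasurable).const_mul _)
  have htend : Tendsto (fun t => ∫ ξ in S, F t ξ ∂μ) (𝓝[>] (0:ℝ)) (𝓝 (∫ ξ in S, G ξ ∂μ)) := by
    refine tendsto_integral_filter_of_dominated_convergence (fun ξ => 2 * ‖v‖ * f ξ)
      (Eventually.of_forall hmeasF) ?_ ?_ ?_
    · filter_upwards [self_mem_nhdsWithin] with t ht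
      filter_upwards [ae_restrict_mem (hS ▸ isClosed_sphere.measurableSet)] with ξ hξ
      exact hbound_ptwise t ht ξ hξ
    · exact hf_int.const_mul (2 * ‖v‖)
    · refine Eventually.of_forall fun ξ => ?_
      by_cases hα : ⟪u,ξ⟫ = 0
      · have heq : ∀ᶠ t in 𝓝[>] (0:ℝ), F t ξ = G ξ := by
          filter_upwards [self_mem_nhdsWithin] with t ht
          simp only [mem_Ioi] at ht
          rw [hF, hG]
          simp only [hα, if_pos, zero_add, zero_sub, abs_neg, abs_zero, mul_zero, sub_zero,
            abs_mul, abs_of_pos ht]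
          field_simp
          ring
        exact Tendsto.congr' (heq.mono fun t h => h.symm) tendsto_const_nhds
      · have hδ : (0:ℝ) < |⟪u,ξ⟫| / (|⟪v,ξ⟫| + 1) := by positivity
        have heq : ∀ᶠ t in 𝓝[>] (0:ℝ), F t ξ = G ξ := by
          filter_upwards [Ioo_mem_nhdsGT_of_mem ⟨le_refl 0, hδ⟩] with t ht
          obtain ⟨ht0, htδ⟩ := ht
          have hmax : max |⟪u,ξ⟫| (t * |⟪v,ξ⟫|) = |⟪u,ξ⟫| := by
            apply max_eq_left
            have h2 : t * (|⟪v,ξ⟫| + 1) < |⟪u,ξ⟫| := (lt_div_iff₀ (by positivity)).mp htδ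
            nlinarith [abs_nonneg ⟪v,ξ⟫]
          rw [hF, hG]
          dsimp only
          have hz : |⟪u,ξ⟫ + t*⟪v,ξ⟫| + |⟪u,ξ⟫ - t*⟪v,ξ⟫| - 2*|⟪u,ξ⟫| = 0 := by
            rw [abs_add_abs_sub_eq, abs_mul, abs_of_pos ht0, hmax]; ring
          rw [hz, if_neg hα]
          ring
        exact Tendsto.congr' (heq.mono fun t h => h.symm) tendsto_const_nhds
  rw [hGzero] at htend
  have hlb : ∀ᶠ t in 𝓝[>] (0:ℝ), ‖v‖^2 ≤ ∫ ξ in S, F t ξ ∂μ := by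
    filter_upwards [self_mem_nhdsWithin] with t ht
    simp only [mem_Ioi] at ht
    have h1 := hle t ht
    have h2 : ∫ ξ in S, F t ξ ∂μ = t⁻¹ * ∫ ξ in S,
        (|⟪u,ξ⟫ + t*⟪v,ξ⟫| + |⟪u,ξ⟫ - t*⟪v,ξ⟫| - 2*|⟪u,ξ⟫|) * f ξ ∂μ := by
      rw [hF]
      exact integral_const_mul t⁻¹ _
    rw [h2]
    calc ‖v‖^2 = t⁻¹ * (t * ‖v‖^2) := by field_simp
      _ ≤ _ := mul_le_mul_of_nonneg_left h1 (inv_nonneg.mpr ht.le)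
  have hle0 : ‖v‖^2 ≤ 0 := ge_of_tendsto htend hlb
  have hgt : (0:ℝ) < ‖v‖^2 := pow_pos (norm_pos_iff.mpr hv) 2
  linarith


theorem zonoid_strictly_convex (n : ℕ) (hn : 2 ≤ n)
    (f : EuclideanSpace ℝ (Fin n) → ℝ)
    (hf_int : IntegrableOn f (sphere (0 : EuclideanSpace ℝ (Fin n)) 1) (μH[(n : ℝ) - 1]))
    (hf_nonneg : ∀ ξ, 0 ≤ f ξ)
    (hf_pos : 0 < ∫ ξ in sphere (0 : EuclideanSpace ℝ (Fin n)) 1, f ξ ∂(μH[(n : ℝ) - 1]))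
    (Z : Set (EuclideanSpace ℝ (Fin n))) (hZc : IsCompact Z) (hZconv : Convex ℝ Z)
    (hZsupp : ∀ x : EuclideanSpace ℝ (Fin n),
      (⨆ y : Z, ⟪x, (y : EuclideanSpace ℝ (Fin n))⟫) =
        ∫ ξ in sphere (0 : EuclideanSpace ℝ (Fin n)) 1, |⟪x, ξ⟫| * f ξ ∂(μH[(n : ℝ) - 1])) :
    StrictConvex ℝ Z := by
  intro x hx y hy hxy a b ha hb hab
  by_contra hp
  haveI hnZ : Nonempty Z := ⟨⟨x, hx⟩⟩
  have hbdd : ∀ w : EuclideanSpace ℝ (Fin n),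
      BddAbove (range fun y : Z => ⟪w, (y : EuclideanSpace ℝ (Fin n))⟫) := by
    intro w
    have hrange : (range fun y : Z => ⟪w, (y : EuclideanSpace ℝ (Fin n))⟫)
        = (fun z => ⟪w, z⟫) '' Z := by
      ext r
      constructor
      · rintro ⟨⟨z, hz⟩, rfl⟩; exact ⟨z, hz, rfl⟩
      · rintro ⟨z, hz, rfl⟩; exact ⟨⟨z, hz⟩, rfl⟩
    rw [hrange]
    exact (hZc.image (continuous_const.inner continuous_id)).bddAbove
  have hub : ∀ (w z : EuclideanSpace ℝ (Fin n)), z ∈ Z →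
      ⟪w, z⟫ ≤ ∫ ξ in sphere (0 : EuclideanSpace ℝ (Fin n)) 1, |⟪w,ξ⟫| * f ξ ∂(μH[(n : ℝ) - 1]) := by
    intro w z hz
    rw [← hZsupp w]
    exact le_ciSup (hbdd w) ⟨z, hz⟩
  obtain ⟨u, hu0, hux, huy⟩ : ∃ u : EuclideanSpace ℝ (Fin n),
      u ≠ 0 ∧ (∀ z ∈ Z, ⟪u,z⟫ ≤ ⟪u,x⟫) ∧ ⟪u,y⟫ = ⟪u,x⟫ := by
    by_cases hint : (interior Z).Nonempty
    · obtain ⟨ℓ, hℓ⟩ := geometric_hahn_banach_open_point hZconv.interior isOpen_interior hp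
      obtain ⟨w0, hw0⟩ := hint
      have hZle : ∀ z ∈ Z, ℓ z ≤ ℓ (a•x+b•y) := by
        intro z hz
        have htd : Tendsto (fun θ : ℝ => ℓ ((1-θ)•z + θ•w0)) (𝓝[>] 0) (𝓝 (ℓ z)) := by
          have hcont : Continuous fun θ : ℝ => ℓ ((1-θ)•z + θ•w0) :=
            ℓ.continuous.comp (((continuous_const.sub continuous_id).smul continuous_const).add
              (continuous_id.smul continuous_const))
          have h0 := hcont.tendsto 0
          simp only [sub_zero, one_smul, zero_smul, add_zero] at h0
          exact h0.mono_left nhdsWithin_le_nhds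
        refine le_of_tendsto htd ?_
        filter_upwards [Ioo_mem_nhdsGT_of_mem ⟨le_refl (0:ℝ), one_pos⟩] with θ hθ
        exact (hℓ _ (hZconv.combo_self_interior_mem_interior hz hw0
          (by linarith [hθ.2]) hθ.1 (by ring))).le
      set u := (InnerProductSpace.toDual ℝ (EuclideanSpace ℝ (Fin n))).symm ℓ with hu
      have hurepr : ∀ z, ⟪u, z⟫ = ℓ z := fun z => InnerProductSpace.toDual_symm_apply
      have hun : u ≠ 0 := by
        intro h0
        have h1 := hℓ w0 hw0
        have h2 : ℓ (a•x+b•y) = 0 := by rw [← hurepr, h0, inner_zero_left]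
        have h3 : ℓ w0 = 0 := by rw [← hurepr, h0, inner_zero_left]
        rw [h2, h3] at h1
        exact lt_irrefl 0 h1
      have hlp : ℓ (a•x+b•y) = a * ℓ x + b * ℓ y := by
        rw [map_add, ℓ.map_smul, ℓ.map_smul, smul_eq_mul, smul_eq_mul]
      have hx' := hZle x hx
      have hy' := hZle y hy
      have key : a * (ℓ (a•x+b•y) - ℓ x) + b * (ℓ (a•x+b•y) - ℓ y) = 0 := by
        linear_combination ℓ (a•x+b•y) * hab + hlp
      have h1 : 0 ≤ a * (ℓ (a•x+b•y) - ℓ x) := mul_nonneg ha.le (sub_nonneg.mpr hx')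
      have h2 : 0 ≤ b * (ℓ (a•x+b•y) - ℓ y) := mul_nonneg hb.le (sub_nonneg.mpr hy')
      have hax : a * (ℓ (a•x+b•y) - ℓ x) = 0 := by linarith
      have hby : b * (ℓ (a•x+b•y) - ℓ y) = 0 := by linarith
      have hex : ℓ x = ℓ (a•x+b•y) := by
        rcases mul_eq_zero.mp hax with h | h
        · exact absurd h ha.ne'
        · linarith
      have hey : ℓ y = ℓ (a•x+b•y) := by
        rcases mul_eq_zero.mp hby with h | h
        · exact absurd h hb.ne'
        · linarith
      refine ⟨u, hun, fun z hz => ?_, ?_⟩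
      · rw [hurepr z, hurepr x, hex]; exact hZle z hz
      · rw [hurepr y, hurepr x, hex, hey]
    · have hspan : affineSpan ℝ Z ≠ ⊤ := by
        intro htop
        exact hint ((hZconv.interior_nonempty_iff_affineSpan_eq_top).mpr htop)
      have hdir : (affineSpan ℝ Z).direction ≠ ⊤ := by
        intro htop
        have hne : (affineSpan ℝ Z : Set (EuclideanSpace ℝ (Fin n))).Nonempty :=
          ⟨x, mem_affineSpan ℝ hx⟩
        exact hspan ((AffineSubspace.direction_eq_top_iff_of_nonempty hne).mp htop)
      have hbot : ((affineSpan ℝ Z).direction)ᗮ ≠ ⊥ := by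
        rw [ne_eq, Submodule.orthogonal_eq_bot_iff]
        exact hdir
      obtain ⟨u, huK, hun⟩ := Submodule.exists_mem_ne_zero_of_ne_bot hbot
      have hconst : ∀ z ∈ Z, ⟪u, z⟫ = ⟪u, x⟫ := by
        intro z hz
        have hmem : z - x ∈ (affineSpan ℝ Z).direction := by
          have := AffineSubspace.vsub_mem_direction (mem_affineSpan ℝ hz) (mem_affineSpan ℝ hx)
          simpa using this
        have h0 : ⟪z - x, u⟫ = 0 := Submodule.inner_right_of_mem_orthogonal hmem huK
        have h0' : ⟪u, z - x⟫ = 0 := by rwa [real_inner_comm] at h0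
        rw [inner_sub_right] at h0'
        linarith
      exact ⟨u, hun, fun z hz => (hconst z hz).le, hconst y hy⟩
  have hvne : x - y ≠ 0 := sub_ne_zero_of_ne hxy
  refine zonoid_key hn hf_int hf_nonneg hu0 hvne (sphere_hyperplane_null hn hu0) ?_
  intro t ht
  set v := x - y with hv
  clear_value v
  have hInt : ∀ w : EuclideanSpace ℝ (Fin n),
      IntegrableOn (fun ξ => |⟪w,ξ⟫| * f ξ) (sphere (0 : EuclideanSpace ℝ (Fin n)) 1)
        (μH[(n : ℝ) - 1]) := by
    intro w
    refine Integrable.mono' (hf_int.const_mul ‖w‖)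
      ((continuous_const.inner continuous_id).abs.aestronglyMeasurable.mul
        hf_int.aestronglyMeasurable) ?_
    filter_upwards [ae_restrict_mem isClosed_sphere.measurableSet] with ξ hξ
    rw [Real.norm_eq_abs, abs_mul, abs_abs, abs_of_nonneg (hf_nonneg ξ)]
    have hcs : |⟪w,ξ⟫| ≤ ‖w‖ := by
      have := abs_real_inner_le_norm w ξ
      rwa [mem_sphere_zero_iff_norm.mp hξ, mul_one] at this
    exact mul_le_mul_of_nonneg_right hcs (hf_nonneg ξ)
  have hpt : ∀ ξ, (|⟪u,ξ⟫ + t*⟪v,ξ⟫| + |⟪u,ξ⟫ - t*⟪v,ξ⟫| - 2*|⟪u,ξ⟫|) * f ξ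
      = |⟪u + t•v, ξ⟫| * f ξ + |⟪u - t•v, ξ⟫| * f ξ - 2 * (|⟪u,ξ⟫| * f ξ) := by
    intro ξ
    have e1 : ⟪u + t•v, ξ⟫ = ⟪u,ξ⟫ + t*⟪v,ξ⟫ := by
      rw [inner_add_left, real_inner_smul_left]
    have e2 : ⟪u - t•v, ξ⟫ = ⟪u,ξ⟫ - t*⟪v,ξ⟫ := by
      rw [inner_sub_left, real_inner_smul_left]
    rw [e1, e2]
    ring
  have hsplit : (∫ ξ in sphere (0 : EuclideanSpace ℝ (Fin n)) 1,
        (|⟪u,ξ⟫ + t*⟪v,ξ⟫| + |⟪u,ξ⟫ - t*⟪v,ξ⟫| - 2*|⟪u,ξ⟫|) * f ξ ∂(μH[(n : ℝ) - 1]))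
      = (∫ ξ in sphere (0 : EuclideanSpace ℝ (Fin n)) 1, |⟪u + t•v, ξ⟫| * f ξ ∂(μH[(n : ℝ) - 1]))
        + (∫ ξ in sphere (0 : EuclideanSpace ℝ (Fin n)) 1, |⟪u - t•v, ξ⟫| * f ξ ∂(μH[(n : ℝ) - 1]))
        - 2 * ∫ ξ in sphere (0 : EuclideanSpace ℝ (Fin n)) 1, |⟪u,ξ⟫| * f ξ ∂(μH[(n : ℝ) - 1]) := by
    rw [integral_congr_ae (Eventually.of_forall fun ξ => hpt ξ)]
    have hadd : Integrable (fun ξ => |⟪u + t•v, ξ⟫| * f ξ + |⟪u - t•v, ξ⟫| * f ξ)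
        ((μH[(n : ℝ) - 1]).restrict (sphere (0 : EuclideanSpace ℝ (Fin n)) 1)) :=
      (hInt (u + t•v)).add (hInt (u - t•v))
    have hmul : Integrable (fun ξ => 2 * (|⟪u, ξ⟫| * f ξ))
        ((μH[(n : ℝ) - 1]).restrict (sphere (0 : EuclideanSpace ℝ (Fin n)) 1)) :=
      (hInt u).const_mul 2
    rw [integral_sub hadd hmul, integral_add (hInt (u + t•v)) (hInt (u - t•v)),
      integral_const_mul]
  rw [hsplit]
  have h1 := hub (u + t•v) x hx
  have h2 := hub (u - t•v) y hy
  have h3 : (∫ ξ in sphere (0 : EuclideanSpace ℝ (Fin n)) 1,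
      |⟪u,ξ⟫| * f ξ ∂(μH[(n : ℝ) - 1])) = ⟪u,x⟫ := by
    rw [← hZsupp u]
    refine le_antisymm (ciSup_le fun z => hux z z.2) (le_ciSup (hbdd u) ⟨x, hx⟩)
  have hvv : ⟪v,x⟫ - ⟪v,y⟫ = ‖v‖^2 := by
    rw [← inner_sub_right, ← hv, real_inner_self_eq_norm_sq]
  have hexp : ⟪u + t•v, x⟫ + ⟪u - t•v, y⟫ - 2*⟪u,x⟫ = t * ‖v‖^2 := by
    rw [inner_add_left, inner_sub_left, real_inner_smul_left, real_inner_smul_left]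
    linear_combination t * hvv + huy
  linarith [h1, h2]
end
end

section
/- Let H: R^n → R be positively homogeneous of degree d and suppose two even tempered distributions S, T on R^n, both homogeneous of degree −1, have equal restrictions to R^n \ {0} after Fourier transform (i.e., the Fourier transforms of S and T agree as distributions on R^n \ {0}). Then S = T on R^n \ {0}. In particular, two even distributions homogeneous of degree −1 that differ by a polynomial are equal. -/
open MeasureTheory Real Set Metric
open scoped RealInnerProductSpace ENNReal MeasureTheory

open SchwartzMap
open scoped FourierTransform

set_option maxHeartbeats 1000000

noncomputable section

namespace HomogAux

variable {n : ℕ}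

abbrev EV (n : ℕ) := EuclideanSpace ℝ (Fin n)

def sEquiv (c : ℝ) (hc : c ≠ 0) : EV n ≃L[ℝ] EV n :=
  (LinearEquiv.smulOfNeZero ℝ (EV n) c hc).toContinuousLinearEquiv

@[simp] lemma sEquiv_apply (c : ℝ) (hc : c ≠ 0) (x : EV n) : sEquiv c hc x = c • x := rfl

def dil (c : ℝ) (hc : c ≠ 0) : 𝓢(EV n, ℂ) →L[ℂ] 𝓢(EV n, ℂ) :=
  SchwartzMap.compCLMOfContinuousLinearEquiv ℂ (sEquiv c hc)

@[simp] lemma dil_apply (c : ℝ) (hc : c ≠ 0) (f : 𝓢(EV n, ℂ)) (x : EV n) :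
    dil c hc f x = f (c • x) := rfl

lemma iteratedFDeriv_dil_zero (c : ℝ) (hc : c ≠ 0) (f : 𝓢(EV n, ℂ)) (l : ℕ) :
    iteratedFDeriv ℝ l (⇑(dil c hc f)) 0 = c ^ l • iteratedFDeriv ℝ l (⇑f) 0 := by
  have h1 : ⇑(dil c hc f) = ⇑f ∘ ⇑((sEquiv c hc).toContinuousLinearMap) := rfl
  rw [h1, ContinuousLinearMap.iteratedFDeriv_comp_right _ (f.smooth ⊤) _ (by exact_mod_cast le_top)]
  ext v
  simp only [ContinuousMultilinearMap.compContinuousLinearMap_apply,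
    ContinuousMultilinearMap.smul_apply]
  have h0 : (sEquiv c hc).toContinuousLinearMap (0 : EV n) = 0 := map_zero _
  rw [h0]
  have : (fun i : Fin l => (sEquiv c hc).toContinuousLinearMap (v i)) = fun i => c • v i := rfl
  rw [this, ContinuousMultilinearMap.map_smul_univ]
  simp

lemma norm_iteratedFDeriv_comp_smul_le {f : EV n → ℝ} (hf : ContDiff ℝ ((⊤ : ℕ∞) : WithTop ℕ∞) f) (c : ℝ)
    (hc : c ≠ 0) (l : ℕ) (x : EV n) :
    ‖iteratedFDeriv ℝ l (fun y => f (c • y)) x‖ ≤ |c| ^ l * ‖iteratedFDeriv ℝ l f (c • x)‖ := by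
  have h1 : (fun y => f (c • y)) = f ∘ ⇑((sEquiv (n := n) c hc).toContinuousLinearMap) := rfl
  rw [h1, ContinuousLinearMap.iteratedFDeriv_comp_right _ hf _ (by exact_mod_cast le_top)]
  have h2 : (sEquiv (n := n) c hc).toContinuousLinearMap x = c • x := rfl
  rw [h2]
  calc ‖(iteratedFDeriv ℝ l f (c • x)).compContinuousLinearMap
        (fun _ => (sEquiv (n := n) c hc).toContinuousLinearMap)‖
      ≤ ‖iteratedFDeriv ℝ l f (c • x)‖ *
        ∏ _i : Fin l, ‖(sEquiv (n := n) c hc).toContinuousLinearMap‖ :=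
        ContinuousMultilinearMap.norm_compContinuousLinearMap_le _ _
    _ ≤ |c| ^ l * ‖iteratedFDeriv ℝ l f (c • x)‖ := by
        rw [mul_comm]
        apply mul_le_mul_of_nonneg_right _ (norm_nonneg _)
        rw [Finset.prod_const]
        have hle : ‖(sEquiv (n := n) c hc).toContinuousLinearMap‖ ≤ |c| := by
          apply ContinuousLinearMap.opNorm_le_bound _ (abs_nonneg c)
          intro y
          have : (sEquiv (n := n) c hc).toContinuousLinearMap y = c • y := rfl
          rw [this, norm_smul, Real.norm_eq_abs]
        rw [Finset.card_univ, Fintype.card_fin]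
        exact pow_le_pow_left₀ (norm_nonneg _) hle l


lemma taylor_bound {f : EV n → ℂ} (hf : ContDiff ℝ ((⊤ : ℕ∞) : WithTop ℕ∞) f) {M : ℝ} :
    ∀ (j l : ℕ), (∀ i, i < j → iteratedFDeriv ℝ (l + i) f 0 = 0) →
      (∀ x, ‖iteratedFDeriv ℝ (l + j) f x‖ ≤ M) →
      ∀ x, ‖iteratedFDeriv ℝ l f x‖ ≤ M * ‖x‖ ^ j := by
  intro j
  induction j with
  | zero => intro l _ hM x; simpa using hM x
  | succ j IH =>
    intro l hz hM x
    have hM0 : 0 ≤ M := le_trans (norm_nonneg _) (hM 0)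
    have h1 : ∀ y : EV n, ‖iteratedFDeriv ℝ (l + 1) f y‖ ≤ M * ‖y‖ ^ j := by
      apply IH (l + 1)
      · intro i hi
        have := hz (i + 1) (by omega)
        rwa [show l + 1 + i = l + (i + 1) by omega]
      · intro x
        have := hM x
        rwa [show l + (j + 1) = l + 1 + j by omega] at this
    have hg0 : iteratedFDeriv ℝ l f 0 = 0 := by
      have := hz 0 (by omega); simpa using this
    have hdiff : ∀ y : EV n, DifferentiableAt ℝ (iteratedFDeriv ℝ l f) y := by
      intro y
      exact (hf.differentiable_iteratedFDeriv (by exact_mod_cast lt_top_iff_ne_top.2 (by simp))).differentiableAt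
    have key := Convex.norm_image_sub_le_of_norm_fderiv_le
      (f := iteratedFDeriv ℝ l f) (C := M * ‖x‖ ^ j) (s := closedBall (0 : EV n) ‖x‖)
      (fun y _ => hdiff y)
      (fun y hy => by
        rw [norm_fderiv_iteratedFDeriv]
        refine le_trans (h1 y) ?_
        have : ‖y‖ ≤ ‖x‖ := by simpa [dist_eq_norm] using hy
        exact mul_le_mul_of_nonneg_left (pow_le_pow_left₀ (norm_nonneg _) this j) hM0)
      (convex_closedBall _ _) (mem_closedBall_self (norm_nonneg x))
      (by simpa using mem_closedBall_self (norm_nonneg x) : x ∈ closedBall (0 : EV n) ‖x‖)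
    rw [hg0, sub_zero, sub_zero] at key
    calc ‖iteratedFDeriv ℝ l f x‖ ≤ M * ‖x‖ ^ j * ‖x‖ := key
      _ = M * ‖x‖ ^ (j + 1) := by ring



theorem key (L : 𝓢(EV n, ℂ) →L[ℂ] ℂ)
    (hsupp : ∀ φ : 𝓢(EV n, ℂ), tsupport (⇑φ) ⊆ {(0 : EV n)}ᶜ → L φ = 0)
    (hscal : ∀ φ : 𝓢(EV n, ℂ), L (dil 2⁻¹ (by norm_num) φ) = 2 * L φ)
    (φ : 𝓢(EV n, ℂ)) : L φ = 0 := by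
  classical
  obtain ⟨s, C, hC, hbound⟩ := Seminorm.bound_of_continuous (schwartz_withSeminorms ℂ (EV n) ℂ)
    ((normSeminorm ℂ ℂ).comp L.toLinearMap) (by exact L.continuous.norm)
  have hLle : ∀ f : 𝓢(EV n, ℂ),
      ‖L f‖ ≤ (C : ℝ) * (s.sup (schwartzSeminormFamily ℂ (EV n) ℂ)) f := by
    intro f
    have := hbound f
    simpa [Seminorm.comp_apply, NNReal.smul_def, smul_eq_mul] using this
  set N := s.sup (fun p : ℕ × ℕ => p.2) with hN
  set K := s.sup (fun p : ℕ × ℕ => p.1) with hK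
  have stepA : ∀ ψ : 𝓢(EV n, ℂ), (∀ l, l ≤ N → iteratedFDeriv ℝ l (⇑ψ) 0 = 0) → L ψ = 0 := by
    intro ψ hjet
    set M := SchwartzMap.seminorm ℝ 0 (N + 1) ψ with hMdef
    have hM0 : 0 ≤ M := apply_nonneg _ _
    have hM : ∀ x, ‖iteratedFDeriv ℝ (N + 1) (⇑ψ) x‖ ≤ M := fun x => by
      simpa using ψ.norm_iteratedFDeriv_le_seminorm ℝ (N + 1) x
    have htay : ∀ l, l ≤ N + 1 → ∀ x, ‖iteratedFDeriv ℝ l (⇑ψ) x‖ ≤ M * ‖x‖ ^ (N + 1 - l) := by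
      intro l hl
      apply taylor_bound (ψ.smooth (⊤ : ℕ∞))
      · intro i hi; exact hjet (l + i) (by omega)
      · intro x; rw [show l + (N + 1 - l) = N + 1 by omega]; exact hM x
    set χ : ContDiffBump (0 : EV n) := ⟨1, 2, one_pos, one_lt_two⟩ with hχdef
    have hχsmooth : ContDiff ℝ ((⊤ : ℕ∞) : WithTop ℕ∞) (⇑χ) := χ.contDiff
    have hχcs : HasCompactSupport (⇑χ) := χ.hasCompactSupport
    have hBsex : ∀ i : ℕ, ∃ Bi : ℝ, ∀ y, ‖iteratedFDeriv ℝ i (⇑χ) y‖ ≤ Bi := fun i =>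
      ((hχsmooth.continuous_iteratedFDeriv (by exact_mod_cast le_top)).norm).bounded_above_of_compact_support
        (hχcs.iteratedFDeriv i).norm |>.imp fun Bi hBi y => by simpa using hBi y
    choose Bs hBs using hBsex
    set B := max 1 ((Finset.range (N + 1)).sup' ⟨0, by simp⟩ Bs) with hBdef
    have hB1 : (1 : ℝ) ≤ B := le_max_left _ _
    have hB0 : (0 : ℝ) ≤ B := le_trans zero_le_one hB1
    have hB : ∀ i, i ≤ N → ∀ y, ‖iteratedFDeriv ℝ i (⇑χ) y‖ ≤ B := by
      intro i hi y
      refine (hBs i y).trans (le_trans ?_ (le_max_right _ _))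
      exact Finset.le_sup' Bs (by simp [Finset.mem_range]; omega)
    set A := 2 ^ K * ((N + 1) * (2 ^ N * (B * (M * 2 ^ (N + 1))))) with hAdef
    have hA0 : 0 ≤ A := by positivity
    have main : ∀ ε : ℝ, 0 < ε → ε ≤ 1 → ‖L ψ‖ ≤ (C : ℝ) * (A * ε) := by
      intro ε hε hε1
      set χε : EV n → ℝ := fun x => χ (ε⁻¹ • x) with hχεdef
      have hεinv : (ε : ℝ)⁻¹ ≠ 0 := inv_ne_zero hε.ne'
      have hχε1 : ∀ x : EV n, ‖x‖ ≤ ε → χε x = 1 := by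
        intro x hx
        apply χ.one_of_mem_closedBall
        simp only [mem_closedBall, dist_zero_right, hχdef]
        rw [norm_smul, norm_inv, Real.norm_eq_abs, abs_of_pos hε]
        rw [inv_mul_le_iff₀ hε, mul_one]
        exact hx
      have hχεsupp : Function.support χε ⊆ closedBall (0 : EV n) (2 * ε) := by
        intro x hx
        have hne : χ (ε⁻¹ • x) ≠ 0 := fun h => hx (by simp [hχεdef, h])
        have this := Function.mem_support.mpr hne
        rw [χ.support_eq] at this
        simp only [mem_ball, dist_zero_right] at this
        rw [norm_smul, norm_inv, Real.norm_eq_abs, abs_of_pos hε] at this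
        simp only [mem_closedBall, dist_zero_right]
        nlinarith [norm_nonneg x, (inv_mul_lt_iff₀ hε).mp this]
      have hχεsm : ContDiff ℝ ((⊤ : ℕ∞) : WithTop ℕ∞) χε :=
        hχsmooth.comp (contDiff_id.const_smul ε⁻¹)
      have hχεbd : ∀ i x, ‖iteratedFDeriv ℝ i χε x‖ ≤ |ε⁻¹| ^ i * Bs i := by
        intro i x
        refine (norm_iteratedFDeriv_comp_smul_le hχsmooth ε⁻¹ hεinv i x).trans ?_
        exact mul_le_mul_of_nonneg_left (hBs i _) (by positivity)
      have hgrowth : Function.HasTemperateGrowth χε := by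
        refine ⟨hχεsm, fun i => ⟨0, |ε⁻¹| ^ i * Bs i, fun x => ?_⟩⟩
        simpa using hχεbd i x
      set Ψ : 𝓢(EV n, ℂ) :=
        SchwartzMap.bilinLeftCLM ((ContinuousLinearMap.lsmul ℝ ℝ : ℝ →L[ℝ] ℂ →L[ℝ] ℂ).flip)
          hgrowth ψ with hΨdef
      have hΨ : ∀ x, Ψ x = χε x • ψ x := fun x => rfl
      have hΨfun : ⇑Ψ = fun x => χε x • ψ x := funext hΨ
      -- L ψ = L Ψ
      have hLψΨ : L ψ = L Ψ := by
        have hsub : L (ψ - Ψ) = 0 := by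
          apply hsupp
          have hclosed : IsClosed {x : EV n | ε ≤ ‖x‖} :=
            isClosed_le continuous_const continuous_norm
          have hsupp2 : Function.support (⇑(ψ - Ψ)) ⊆ {x : EV n | ε ≤ ‖x‖} := by
            intro x hx
            by_contra hc
            simp only [mem_setOf_eq, not_le] at hc
            apply hx
            simp [SchwartzMap.sub_apply, hΨ, hχε1 x hc.le]
          refine subset_trans (closure_minimal hsupp2 hclosed) ?_
          intro x hx
          simp only [mem_compl_iff, mem_singleton_iff]
          rintro rfl
          simp only [mem_setOf_eq, norm_zero] at hx
          linarith
        have h2 := map_sub L ψ Ψ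
        rw [hsub] at h2
        exact (sub_eq_zero.mp h2.symm)
      have hseminorm : ∀ p ∈ s, schwartzSeminormFamily ℂ (EV n) ℂ p Ψ ≤ A * ε := by
        rintro ⟨k, l⟩ hp
        have hkK : k ≤ K := Finset.le_sup (f := fun p : ℕ × ℕ => p.1) hp
        have hlN : l ≤ N := Finset.le_sup (f := fun p : ℕ × ℕ => p.2) hp
        rw [schwartzSeminormFamily_apply]
        apply SchwartzMap.seminorm_le_bound ℂ k l Ψ (by positivity)
        intro x
        by_cases hx : ‖x‖ ≤ 2 * ε
        · have hleib := norm_iteratedFDeriv_smul_le (𝕜 := ℝ) hχεsm (ψ.smooth (⊤ : ℕ∞)) x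
            (n := l) (by exact_mod_cast le_top)
          have hiter : iteratedFDeriv ℝ l (⇑Ψ) x
              = iteratedFDeriv ℝ l (fun y => χε y • ψ y) x := by rw [hΨfun]
          have hterm : ∀ i ∈ Finset.range (l + 1),
              (l.choose i : ℝ) * ‖iteratedFDeriv ℝ i χε x‖ *
                ‖iteratedFDeriv ℝ (l - i) (⇑ψ) x‖
                ≤ 2 ^ N * (B * (M * (2 ^ (N + 1) * ε))) := by
            intro i hi
            simp only [Finset.mem_range] at hi
            have hil : i ≤ l := by omega
            have hchoose : (l.choose i : ℝ) ≤ 2 ^ N := by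
              have h1 : l.choose i ≤ 2 ^ l := by
                calc l.choose i ≤ ∑ j ∈ Finset.range (l + 1), l.choose j :=
                      Finset.single_le_sum (fun j _ => Nat.zero_le _)
                        (Finset.mem_range.mpr (by omega))
                  _ = 2 ^ l := Nat.sum_range_choose l
              calc (l.choose i : ℝ) ≤ (2 : ℝ) ^ l := by exact_mod_cast h1
                _ ≤ 2 ^ N := by
                    exact pow_le_pow_right₀ one_le_two hlN
            have hc1 : ‖iteratedFDeriv ℝ i χε x‖ ≤ B * ε⁻¹ ^ i := by
              refine (hχεbd i x).trans ?_
              rw [abs_of_pos (inv_pos.mpr hε)]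
              have hBsB : Bs i ≤ B := le_trans
                (Finset.le_sup' Bs (Finset.mem_range.mpr (by omega)))
                (le_max_right _ _)
              calc ε⁻¹ ^ i * Bs i ≤ ε⁻¹ ^ i * B :=
                    mul_le_mul_of_nonneg_left hBsB (by positivity)
                _ = B * ε⁻¹ ^ i := mul_comm _ _
            set e := N + 1 - (l - i) with hedef
            have hie : i + 1 ≤ e := by omega
            have hc2 : ‖iteratedFDeriv ℝ (l - i) (⇑ψ) x‖ ≤ M * (2 ^ (N + 1) * ε ^ e) := by
              refine (htay (l - i) (by omega) x).trans ?_
              apply mul_le_mul_of_nonneg_left _ hM0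
              calc ‖x‖ ^ e ≤ (2 * ε) ^ e := by
                    exact pow_le_pow_left₀ (norm_nonneg _) hx e
                _ = 2 ^ e * ε ^ e := by rw [mul_pow]
                _ ≤ 2 ^ (N + 1) * ε ^ e := by
                    apply mul_le_mul_of_nonneg_right _ (by positivity)
                    exact pow_le_pow_right₀ one_le_two (by omega)
            have hεpow : ε⁻¹ ^ i * ε ^ e ≤ ε := by
              have h1 : ε ^ e ≤ ε ^ (i + 1) :=
                pow_le_pow_of_le_one hε.le hε1 hie
              calc ε⁻¹ ^ i * ε ^ e ≤ ε⁻¹ ^ i * ε ^ (i + 1) :=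
                    mul_le_mul_of_nonneg_left h1 (by positivity)
                _ = ε := by
                    rw [pow_succ, ← mul_assoc, ← mul_pow, inv_mul_cancel₀ hε.ne',
                      one_pow, one_mul]
            calc (l.choose i : ℝ) * ‖iteratedFDeriv ℝ i χε x‖ *
                  ‖iteratedFDeriv ℝ (l - i) (⇑ψ) x‖
                ≤ 2 ^ N * (B * ε⁻¹ ^ i) * (M * (2 ^ (N + 1) * ε ^ e)) := by
                  gcongr <;> positivity
              _ = (2 ^ N * B * M * 2 ^ (N + 1)) * (ε⁻¹ ^ i * ε ^ e) := by ring
              _ ≤ (2 ^ N * B * M * 2 ^ (N + 1)) * ε :=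
                  mul_le_mul_of_nonneg_left hεpow (by positivity)
              _ = 2 ^ N * (B * (M * (2 ^ (N + 1) * ε))) := by ring
          have hsum : ‖iteratedFDeriv ℝ l (⇑Ψ) x‖
              ≤ (N + 1) * (2 ^ N * (B * (M * (2 ^ (N + 1) * ε)))) := by
            rw [hiter]
            refine hleib.trans ?_
            refine (Finset.sum_le_sum hterm).trans ?_
            rw [Finset.sum_const, Finset.card_range, nsmul_eq_mul]
            apply mul_le_mul_of_nonneg_right _ (by positivity)
            exact_mod_cast Nat.cast_le.mpr (by omega : l + 1 ≤ N + 1)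
          have hxk : ‖x‖ ^ k ≤ 2 ^ K := by
            have h2 : ‖x‖ ≤ 2 := hx.trans (by linarith)
            calc ‖x‖ ^ k ≤ 2 ^ k := pow_le_pow_left₀ (norm_nonneg _) h2 k
              _ ≤ 2 ^ K := pow_le_pow_right₀ one_le_two hkK
          calc ‖x‖ ^ k * ‖iteratedFDeriv ℝ l (⇑Ψ) x‖
              ≤ 2 ^ K * ((N + 1) * (2 ^ N * (B * (M * (2 ^ (N + 1) * ε))))) :=
                mul_le_mul hxk hsum (norm_nonneg _) (by positivity)
            _ = A * ε := by rw [hAdef]; ring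
        · have hsuppΨ : Function.support (⇑Ψ) ⊆ closedBall (0 : EV n) (2 * ε) := by
            intro y hy
            apply hχεsupp
            intro h0
            exact hy (by simp [hΨ, h0])
          have hts : tsupport (⇑Ψ) ⊆ closedBall (0 : EV n) (2 * ε) :=
            closure_minimal hsuppΨ Metric.isClosed_closedBall
          have hnot : x ∉ tsupport (⇑Ψ) := fun hmem =>
            hx (by simpa [mem_closedBall, dist_zero_right] using hts hmem)
          have h0 : iteratedFDeriv ℝ l (⇑Ψ) x = 0 := by
            by_contra hne
            exact hnot (support_iteratedFDeriv_subset l (Function.mem_support.mpr hne))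
          rw [h0, norm_zero, mul_zero]
          positivity
      rw [hLψΨ]
      refine (hLle Ψ).trans ?_
      apply mul_le_mul_of_nonneg_left _ (NNReal.coe_nonneg C)
      exact Seminorm.finset_sup_apply_le (by positivity) hseminorm
    -- from main, conclude L ψ = 0
    have hnorm0 : ‖L ψ‖ ≤ 0 := by
      by_contra hcon
      push_neg at hcon
      rcases eq_or_lt_of_le (by positivity : (0 : ℝ) ≤ (C : ℝ) * A) with hz | hpos
      · have := main 1 one_pos le_rfl
        rw [mul_one, ← hz] at this
        linarith
      · set ε0 := min 1 (‖L ψ‖ / (2 * ((C : ℝ) * A))) with hε0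
        have hε0pos : 0 < ε0 := lt_min one_pos (by positivity)
        have h1 := main ε0 hε0pos (min_le_left _ _)
        have h2 : (C : ℝ) * (A * ε0) ≤ ‖L ψ‖ / 2 := by
          have : ε0 ≤ ‖L ψ‖ / (2 * ((C : ℝ) * A)) := min_le_right _ _
          calc (C : ℝ) * (A * ε0) = ((C : ℝ) * A) * ε0 := by ring
            _ ≤ ((C : ℝ) * A) * (‖L ψ‖ / (2 * ((C : ℝ) * A))) :=
                mul_le_mul_of_nonneg_left this (le_of_lt hpos)
            _ = ‖L ψ‖ / 2 := by have hA : A ≠ 0 := (fun h => by simp [h] at hpos); field_simp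
        linarith
    exact norm_eq_zero.mp (le_antisymm hnorm0 (norm_nonneg _))
  -- Step B: iterate the scaling operator to kill the jet
  have h2ne : ((2 : ℝ)⁻¹ : ℝ) ≠ 0 := by norm_num
  set dop : 𝓢(EV n, ℂ) →L[ℂ] 𝓢(EV n, ℂ) := dil 2⁻¹ h2ne with hdop
  set seq : ℕ → 𝓢(EV n, ℂ) := fun m =>
    Nat.rec φ (fun m ψ => dop ψ - (((2 : ℝ)⁻¹ ^ m : ℝ) • ψ)) m with hseq
  have hseq0 : seq 0 = φ := rfl
  have hseqS : ∀ m, seq (m + 1) = dop (seq m) - (((2 : ℝ)⁻¹ ^ m : ℝ) • seq m) := fun m => rfl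
  have hjets : ∀ m, ∀ l, l < m → iteratedFDeriv ℝ l (⇑(seq m)) 0 = 0 := by
    intro m
    induction m with
    | zero => intro l hl; omega
    | succ m IH =>
      intro l hl
      have hfun : ⇑(seq (m + 1)) = ⇑(dop (seq m)) + (-((2 : ℝ)⁻¹ ^ m)) • ⇑(seq m) := by
        funext x
        rw [hseqS]
        rw [SchwartzMap.sub_apply, SchwartzMap.smul_apply, Pi.add_apply, Pi.smul_apply,
          neg_smul, sub_eq_add_neg]
      have hg : ContDiff ℝ (l : ℕ∞) ((-((2 : ℝ)⁻¹ ^ m)) • ⇑(seq m)) :=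
        ((seq m).smooth (l : ℕ∞)).const_smul (-((2 : ℝ)⁻¹ ^ m))
      rw [hfun, iteratedFDeriv_add_apply ((dop (seq m)).smooth (l : ℕ∞)).contDiffAt hg.contDiffAt,
        iteratedFDeriv_const_smul_apply ((seq m).smooth (l : ℕ∞)).contDiffAt]
      rw [show ⇑(dop (seq m)) = ⇑(dil 2⁻¹ h2ne (seq m)) from rfl,
        iteratedFDeriv_dil_zero 2⁻¹ h2ne (seq m) l]
      rcases Nat.lt_or_ge l m with hlm | hlm
      · rw [IH l hlm]; simp
      · have hlmeq : l = m := by omega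
        subst hlmeq
        rw [← add_smul]
        simp
  have hLseq : ∀ m, L (seq m)
      = ((∏ j ∈ Finset.range m, ((2 : ℝ) - (2 : ℝ)⁻¹ ^ j) : ℝ) : ℂ) * L φ := by
    intro m
    induction m with
    | zero => simp [hseq0]
    | succ m IH =>
      rw [hseqS, map_sub, L.map_smul_of_tower, hscal (seq m), IH,
        Finset.prod_range_succ, Complex.real_smul]
      push_cast
      ring
  have hprodpos : (0 : ℝ) < ∏ j ∈ Finset.range (N + 1), ((2 : ℝ) - (2 : ℝ)⁻¹ ^ j) := by
    apply Finset.prod_pos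
    intro j _
    have hle1 : (2 : ℝ)⁻¹ ^ j ≤ 1 := by
      apply pow_le_one₀ <;> norm_num
    linarith
  have hfinal := hLseq (N + 1)
  rw [stepA (seq (N + 1)) (fun l hl => hjets (N + 1) l (by omega))] at hfinal
  rcases mul_eq_zero.mp hfinal.symm with h | h
  · exact absurd h (by exact_mod_cast hprodpos.ne.symm)
  · exact h



lemma fourier_dil (ψ : 𝓢(EV n, ℂ)) (ξ : EV n) :
    𝓕 (fun x : EV n => ψ ((2:ℝ)⁻¹ • x)) ξ
      = ((2 : ℝ) ^ n : ℝ) • 𝓕 (⇑ψ) ((2 : ℝ) • ξ) := by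
  rw [Real.fourier_eq, Real.fourier_eq]
  have hsub := MeasureTheory.Measure.integral_comp_smul (volume : Measure (EV n))
    (f := fun v : EV n => 𝐞 (-⟪v, ξ⟫) • ψ ((2:ℝ)⁻¹ • v)) (2 : ℝ)
  have h1 : (fun x : EV n => 𝐞 (-⟪(2:ℝ) • x, ξ⟫) • ψ ((2:ℝ)⁻¹ • ((2:ℝ) • x)))
      = fun x : EV n => 𝐞 (-⟪x, (2:ℝ) • ξ⟫) • ψ x := by
    funext x
    have hi : ⟪(2:ℝ) • x, ξ⟫ = ⟪x, (2:ℝ) • ξ⟫ := by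
      rw [real_inner_smul_left, real_inner_smul_right]
    have hx : (2:ℝ)⁻¹ • ((2:ℝ) • x) = x := by
      rw [smul_smul]; norm_num
    rw [hi, hx]
  rw [h1] at hsub
  have hfr : Module.finrank ℝ (EV n) = n := finrank_euclideanSpace_fin
  rw [hfr] at hsub
  have habs : |((2:ℝ) ^ n)⁻¹| = ((2:ℝ) ^ n)⁻¹ := abs_of_pos (by positivity)
  rw [habs] at hsub
  have h2 := congrArg (fun z : ℂ => ((2:ℝ) ^ n : ℝ) • z) hsub
  simp only [smul_smul] at h2
  rw [mul_inv_cancel₀ (by positivity : ((2:ℝ)^n) ≠ 0), one_smul] at h2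
  exact h2.symm

end HomogAux

noncomputable section

theorem homogeneous_distributions_equal (n : ℕ) (d : ℝ)
    (H : EuclideanSpace ℝ (Fin n) → ℝ)
    (hhom : ∀ t : ℝ, 0 < t → ∀ x, H (t • x) = t ^ d * H x)
    (S T : SchwartzMap (EuclideanSpace ℝ (Fin n)) ℂ →L[ℂ] ℂ)
    (hSeven : ∀ φ ψ : SchwartzMap (EuclideanSpace ℝ (Fin n)) ℂ,
      (∀ x, ψ x = φ (-x)) → S ψ = S φ)
    (hTeven : ∀ φ ψ : SchwartzMap (EuclideanSpace ℝ (Fin n)) ℂ,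
      (∀ x, ψ x = φ (-x)) → T ψ = T φ)
    -- homogeneity of degree -1 : S(φ(·/t)) = t^(n + (-1)) S(φ)
    (hShom : ∀ t : ℝ, 0 < t → ∀ φ ψ : SchwartzMap (EuclideanSpace ℝ (Fin n)) ℂ,
      (∀ x, ψ x = φ (t⁻¹ • x)) → S ψ = ((t ^ ((n : ℝ) - 1) : ℝ) : ℂ) * S φ)
    (hThom : ∀ t : ℝ, 0 < t → ∀ φ ψ : SchwartzMap (EuclideanSpace ℝ (Fin n)) ℂ,
      (∀ x, ψ x = φ (t⁻¹ • x)) → T ψ = ((t ^ ((n : ℝ) - 1) : ℝ) : ℂ) * T φ)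
    -- the Fourier transforms of S and T agree as distributions on ℝⁿ \ {0}
    (hFT : ∀ φ : SchwartzMap (EuclideanSpace ℝ (Fin n)) ℂ,
      tsupport (φ : EuclideanSpace ℝ (Fin n) → ℂ) ⊆ {(0 : EuclideanSpace ℝ (Fin n))}ᶜ →
      S (SchwartzMap.fourierTransformCLM ℂ φ) = T (SchwartzMap.fourierTransformCLM ℂ φ)) :
    ∀ φ : SchwartzMap (EuclideanSpace ℝ (Fin n)) ℂ,
      tsupport (φ : EuclideanSpace ℝ (Fin n) → ℂ) ⊆ {(0 : EuclideanSpace ℝ (Fin n))}ᶜ →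
      S φ = T φ := by
  intro φ hφ
  have h2ne : ((2:ℝ)⁻¹ : ℝ) ≠ 0 := by norm_num
  have h2ne2 : ((2:ℝ) : ℝ) ≠ 0 := by norm_num
  set Fc : 𝓢(HomogAux.EV n, ℂ) →L[ℂ] 𝓢(HomogAux.EV n, ℂ) := SchwartzMap.fourierTransformCLM ℂ with hFc
  set L : 𝓢(HomogAux.EV n, ℂ) →L[ℂ] ℂ := (S.comp Fc) - (T.comp Fc) with hL
  have hLapp : ∀ ψ : 𝓢(HomogAux.EV n, ℂ), L ψ = S (Fc ψ) - T (Fc ψ) := fun ψ => rfl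
  have hsupp : ∀ ψ : 𝓢(HomogAux.EV n, ℂ), tsupport (⇑ψ) ⊆ {(0 : HomogAux.EV n)}ᶜ → L ψ = 0 := by
    intro ψ h
    rw [hLapp, hFT ψ h, sub_self]
  have hscalar : ((2:ℝ) ^ n) * ((2:ℝ)⁻¹ ^ ((n : ℝ) - 1)) = 2 := by
    rw [Real.inv_rpow (by norm_num : (0:ℝ) ≤ 2), ← Real.rpow_neg (by norm_num : (0:ℝ) ≤ 2)]
    rw [← Real.rpow_natCast (2:ℝ) n, ← Real.rpow_add (by norm_num : (0:ℝ) < 2)]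
    rw [show (n:ℝ) + -((n:ℝ) - 1) = 1 by ring, Real.rpow_one]
  have hscal : ∀ ψ : 𝓢(HomogAux.EV n, ℂ), L (HomogAux.dil 2⁻¹ h2ne ψ) = 2 * L ψ := by
    intro ψ
    have hFd : Fc (HomogAux.dil 2⁻¹ h2ne ψ) = ((2:ℝ) ^ n : ℝ) • (HomogAux.dil 2 h2ne2 (Fc ψ)) := by
      ext ξ
      rw [hFc, SchwartzMap.fourierTransformCLM_apply]
      have hco : ⇑(HomogAux.dil 2⁻¹ h2ne ψ) = fun x : HomogAux.EV n => ψ ((2:ℝ)⁻¹ • x) :=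
        funext fun x => HomogAux.dil_apply 2⁻¹ h2ne ψ x
      rw [SchwartzMap.fourier_coe, hco, HomogAux.fourier_dil ψ ξ, SchwartzMap.smul_apply, HomogAux.dil_apply,
        SchwartzMap.fourierTransformCLM_apply, SchwartzMap.fourier_coe]
    have hS := hShom 2⁻¹ (by norm_num) (Fc ψ) (HomogAux.dil 2 h2ne2 (Fc ψ))
      (fun x => by rw [HomogAux.dil_apply]; norm_num)
    have hT := hThom 2⁻¹ (by norm_num) (Fc ψ) (HomogAux.dil 2 h2ne2 (Fc ψ))
      (fun x => by rw [HomogAux.dil_apply]; norm_num)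
    rw [hLapp, hLapp, hFd, S.map_smul_of_tower, T.map_smul_of_tower, hS, hT]
    have hfold : ((((2:ℝ)^n : ℝ)) : ℂ) * (((2:ℝ)⁻¹ ^ ((n : ℝ) - 1) : ℝ) : ℂ) = 2 := by
      rw [← Complex.ofReal_mul, hscalar]
      norm_num
    rw [Complex.real_smul, Complex.real_smul]
    linear_combination (S (Fc ψ) - T (Fc ψ)) * hfold
  have hkey := HomogAux.key L hsupp hscal
  set ψ0 : 𝓢(HomogAux.EV n, ℂ) := (SchwartzMap.fourierTransformCLE ℂ 𝓢(HomogAux.EV n, ℂ)).symm φ with hψ0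
  have hFψ0 : Fc ψ0 = φ := by
    have h1 := (SchwartzMap.fourierTransformCLE ℂ 𝓢(HomogAux.EV n, ℂ)).apply_symm_apply φ
    have h2 : SchwartzMap.fourierTransformCLE ℂ 𝓢(HomogAux.EV n, ℂ) ψ0 = Fc ψ0 := by
      ext x; rfl
    rw [← h2]
    exact h1
  have h0 := hkey ψ0
  rw [hLapp, hFψ0] at h0
  exact sub_eq_zero.mp h0
end
end
end
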